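/- arXiv:2106.07831 — 4 statements merged into one kernel-verified Lean document; each statement's English description precedes it below -/
import Mathlib

section
/- Suppose n = 3f+1 and each of two honest parties receives Ready messages containing values h and h' respectively, each from a set of at least 2f+1 distinct parties, where every honest party sends at most one Ready message (with a single value). Then h = h'. -/
/-- Ready-message agreement: two honest parties each receiving `2f+1` matching
Ready messages (with values `h` and `h'`) must have `h = h'`, since honest
parties send at most one Ready value. -/
theorem ready_agreement (f n : ℕ) (hn : n = 3 * f + 1) {V : Type*}
    (B : Finset (Fin n)) (hB : B.card ≤ f)
    (m : Fin n → Option V) (h h' : V)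
    (S S' : Finset (Fin n)) (hS : 2 * f + 1 ≤ S.card) (hS' : 2 * f + 1 ≤ S'.card)
    (hsent : ∀ i ∈ S, i ∉ B → m i = some h)
    (hsent' : ∀ i ∈ S', i ∉ B → m i = some h') :
    h = h' := by
  have hunion : (S ∪ S').card ≤ n := by
    simpa using (Finset.card_le_univ (S ∪ S')).trans_eq (by simp)
  have hint : f + 1 ≤ (S ∩ S').card := by
    have := Finset.card_union_add_card_inter S S'
    omega
  have : B.card < (S ∩ S').card := by omega
  have hne : ((S ∩ S') \ B).Nonempty := by
    apply Finset.card_pos.1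
    have := Finset.le_card_sdiff B (S ∩ S')
    omega
  obtain ⟨i, hi⟩ := hne
  obtain ⟨hiI, hiB⟩ := Finset.mem_sdiff.1 hi
  have h1 := hsent i (Finset.mem_inter.1 hiI).1 hiB
  have h2 := hsent' i (Finset.mem_inter.1 hiI).2 hiB
  rw [h1] at h2
  exact Option.some.inj h2
end

section
/- Let n = 3f+1. Suppose two multisets G and G' each consist of n - f reliably-broadcast values drawn from a common global assignment (i.e., any value appearing in both G and G' from the same broadcaster is identical). Suppose in G some value (ℓ, r) appears at least f+1 times and r is the maximum VRF evaluation in G, and likewise in G' some value (ℓ', r') appears at least f+1 times and r' is the maximum in G'. Then (ℓ, r) = (ℓ', r'). -/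
/-- Majority-and-maximum uniqueness: if in each of two `(2f+1)`-sized sets of
reliably-broadcast values a value appears at least `f+1` times and is the
maximum VRF evaluation in that set, then the two values coincide. -/
theorem majority_max_unique (f n : ℕ) (hn : n = 3 * f + 1) {V : Type*} [DecidableEq V]
    (b : Fin n → V) (r : V → ℕ)
    (G G' : Finset (Fin n)) (hG : G.card = 2 * f + 1) (hG' : G'.card = 2 * f + 1)
    (v v' : V)
    (hmajG : f + 1 ≤ (G.filter (fun i => b i = v)).card)
    (hmaxG : ∀ i ∈ G, r (b i) ≤ r v ∧ (r (b i) = r v → b i = v))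
    (hmajG' : f + 1 ≤ (G'.filter (fun i => b i = v')).card)
    (hmaxG' : ∀ i ∈ G', r (b i) ≤ r v' ∧ (r (b i) = r v' → b i = v')) :
    v = v' := by
  have key : ∀ (A B : Finset (Fin n)), f + 1 ≤ A.card → B.card = 2 * f + 1 →
      (A ∩ B).Nonempty := by
    intro A B hA hB
    rw [← Finset.card_pos]
    have hu : (A ∪ B).card ≤ n := by
      simpa using Finset.card_le_univ (A ∪ B)
    have := Finset.card_union_add_card_inter A B
    omega
  obtain ⟨i, hi⟩ := key _ G' hmajG hG'
  rw [Finset.mem_inter, Finset.mem_filter] at hi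
  obtain ⟨⟨_, hbi⟩, hiG'⟩ := hi
  obtain ⟨j, hj⟩ := key _ G hmajG' hG
  rw [Finset.mem_inter, Finset.mem_filter] at hj
  obtain ⟨⟨_, hbj⟩, hjG⟩ := hj
  have h1 : r v ≤ r v' := hbi ▸ (hmaxG' i hiG').1
  have h2 : r v' ≤ r v := hbj ▸ (hmaxG j hjG).1
  have := (hmaxG' i hiG').2 (by rw [hbi]; omega)
  rw [hbi] at this
  exact this
end

section
/- Shamir secrecy: for a uniformly random polynomial A of degree at most f over a finite field (i.e., with uniformly random coefficients a_0,…,a_f), the joint distribution of the evaluations (A(x_1),…,A(x_f)) at f distinct nonzero points is independent of the secret A(0); equivalently, for any two secrets s, s', the number of degree-≤f polynomials with constant term s matching any given f evaluation values equals the number with constant term s'. -/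
open Polynomial

/-- Shamir secrecy: for any secret `s` and any prescribed values `v i` at `f`
distinct nonzero points `x i`, there is exactly one polynomial of degree at
most `f` with constant term `s` matching those values; in particular the
count is independent of `s`. -/
theorem shamir_secrecy {F : Type*} [Field F] [Fintype F] (f : ℕ) (hf : 1 ≤ f)
    (x : Fin f → F) (hinj : Function.Injective x) (hne : ∀ i, x i ≠ 0)
    (s : F) (v : Fin f → F) :
    Nat.card {A : Polynomial F //
      A.natDegree ≤ f ∧ A.eval 0 = s ∧ ∀ i, A.eval (x i) = v i} = 1 := by
  set y : Fin (f + 1) → F := Fin.cons 0 x with hy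
  set r : Fin (f + 1) → F := Fin.cons s v with hr
  have hyinj : Function.Injective y := by
    intro a b
    refine Fin.cases ?_ (fun a' => ?_) a <;> refine Fin.cases ?_ (fun b' => ?_) b
    · intro _; rfl
    · intro h; exact absurd h.symm (by simpa [hy] using hne b')
    · intro h; exact absurd h (by simpa [hy] using hne a')
    · intro h; exact congrArg Fin.succ (hinj (by simpa [hy] using h))
  have hinjOn : Set.InjOn y (Finset.univ : Finset (Fin (f+1))) := hyinj.injOn
  have hcard : (Finset.univ : Finset (Fin (f+1))).card = f + 1 := by simp
  have key : ∀ A : Polynomial F,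
      (A.natDegree ≤ f ∧ A.eval 0 = s ∧ ∀ i, A.eval (x i) = v i) ↔
      A = Lagrange.interpolate Finset.univ y r := by
    intro A
    rw [← Lagrange.eq_interpolate_iff (s := (Finset.univ : Finset (Fin (f+1)))) (v := y) (r := r) hinjOn]
    constructor
    · rintro ⟨hdeg, h0, hv⟩
      refine ⟨?_, ?_⟩
      · rw [hcard]
        calc A.degree ≤ A.natDegree := degree_le_natDegree
          _ < (f + 1 : ℕ) := by exact_mod_cast Nat.lt_succ_of_le hdeg
      · intro i _
        refine Fin.cases ?_ (fun i' => ?_) i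
        · simpa [hy, hr] using h0
        · simpa [hy, hr] using hv i'
    · rintro ⟨hdeg, hev⟩
      rw [hcard] at hdeg
      refine ⟨?_, ?_, ?_⟩
      · by_cases h0 : A = 0
        · simp [h0]
        · exact Nat.lt_succ_iff.mp ((natDegree_lt_iff_degree_lt h0).mpr (by exact_mod_cast hdeg))
      · simpa [hy, hr] using hev 0 (Finset.mem_univ _)
      · intro i
        simpa [hy, hr] using hev i.succ (Finset.mem_univ _)
  rw [Nat.card_eq_one_iff_unique]
  constructor
  · constructor
    intro ⟨A, hA⟩ ⟨B, hB⟩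
    simp only [Subtype.mk.injEq]
    rw [(key A).mp hA, (key B).mp hB]
  · exact ⟨⟨Lagrange.interpolate Finset.univ y r, (key _).mpr rfl⟩⟩
end

section
/- Pedersen commitment binding reduces to discrete log: if c = g1^a · g2^b = g1^{a'} · g2^{b'} in a group of prime order q with a ≠ a' (mod q), then the discrete logarithm of g2 with respect to g1 equals (a − a')·(b' − b)⁻¹ (mod q). -/
/-- Pedersen binding reduces to discrete log: in a group of prime order `q`
generated by `g1`, with `g2 = g1 ^ x`, if
`g1^a * g2^b = g1^{a'} * g2^{b'}` with `a ≠ a'`, then `b' ≠ b` and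
`x = (a - a') / (b' - b)` in `ZMod q`. -/
theorem pedersen_binding {G : Type*} [CommGroup G] [Fintype G]
    (q : ℕ) [Fact q.Prime] (hG : Fintype.card G = q)
    (g1 g2 : G) (hgen : orderOf g1 = q)
    (x : ZMod q) (hg2 : g2 = g1 ^ x.val)
    (a b a' b' : ZMod q)
    (heq : g1 ^ a.val * g2 ^ b.val = g1 ^ a'.val * g2 ^ b'.val)
    (hne : a ≠ a') :
    b' ≠ b ∧ x = (a - a') / (b' - b) := by
  subst hg2
  rw [← pow_mul, ← pow_mul, ← pow_add, ← pow_add, pow_eq_pow_iff_modEq, hgen,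
    ← ZMod.natCast_eq_natCast_iff] at heq
  push_cast at heq
  simp only [ZMod.natCast_val, ZMod.cast_id] at heq
  -- heq : a + x * b = a' + x * b'
  have hkey : x * (b' - b) = a - a' := by ring_nf; linear_combination -heq
  have hbb : b' ≠ b := by
    intro h
    rw [h, sub_self, mul_zero] at hkey
    exact hne (sub_eq_zero.mp hkey.symm)
  refine ⟨hbb, ?_⟩
  field_simp [sub_ne_zero.mpr hbb]
  linear_combination hkey
end
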